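/- arXiv:2304.02580 — 3 statements merged into one kernel-verified Lean document; each statement's English description precedes it below -/
import Mathlib

section
/- Every locally finite graph (every vertex has finite degree) admits an unfriendly partition. -/
open Finset

theorem fin_unfriendly {V : Type*} [Fintype V] (G : SimpleGraph V) :
    ∃ c : V → Fin 2, ∀ v, Nat.card {x // G.Adj v x ∧ c x = c v} ≤
      Nat.card {x // G.Adj v x ∧ c x ≠ c v} := by
  classical
  set φ : (V → Fin 2) → ℕ :=
    fun c => (univ.filter fun p : V × V => G.Adj p.1 p.2 ∧ c p.1 = c p.2).card with hφ
  obtain ⟨c, -, hc⟩ := Finset.exists_min_image univ φ ⟨fun _ => 0, mem_univ _⟩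
  refine ⟨c, fun v => ?_⟩
  set ds : (V → Fin 2) → ℕ :=
    fun c => (univ.filter fun x => G.Adj v x ∧ c x = c v).card with hds
  set dd : (V → Fin 2) → ℕ :=
    fun c => (univ.filter fun x => G.Adj v x ∧ c x ≠ c v).card with hdd
  set Cv : (V → Fin 2) → ℕ :=
    fun c => (univ.filter fun p : V × V =>
      (G.Adj p.1 p.2 ∧ c p.1 = c p.2) ∧ ¬ p.1 = v ∧ ¬ p.2 = v).card with hCv
  have hsplit : ∀ c : V → Fin 2, φ c = Cv c + 2 * ds c := by
    intro c
    set s := univ.filter fun p : V × V => G.Adj p.1 p.2 ∧ c p.1 = c p.2 with hs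
    have hun : s = (s.filter fun p => p.1 = v) ∪
        ((s.filter fun p => ¬ p.1 = v ∧ p.2 = v) ∪
          (s.filter fun p => ¬ p.1 = v ∧ ¬ p.2 = v)) := by
      ext p
      simp only [mem_union, mem_filter]
      tauto
    have hd1 : Disjoint (s.filter fun p => p.1 = v)
        ((s.filter fun p => ¬ p.1 = v ∧ p.2 = v) ∪
          (s.filter fun p => ¬ p.1 = v ∧ ¬ p.2 = v)) := by
      simp only [Finset.disjoint_left, mem_union, mem_filter]
      tauto
    have hd2 : Disjoint (s.filter fun p => ¬ p.1 = v ∧ p.2 = v)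
        (s.filter fun p => ¬ p.1 = v ∧ ¬ p.2 = v) := by
      simp only [Finset.disjoint_left, mem_filter]
      tauto
    have hcard : φ c = (s.filter fun p => p.1 = v).card +
        ((s.filter fun p => ¬ p.1 = v ∧ p.2 = v).card +
          (s.filter fun p => ¬ p.1 = v ∧ ¬ p.2 = v).card) := by
      have h0 : φ c = s.card := rfl
      rw [h0]
      conv_lhs => rw [hun]
      rw [Finset.card_union_of_disjoint hd1, Finset.card_union_of_disjoint hd2]
    have e1 : (s.filter fun p => p.1 = v).card = ds c := by
      apply Finset.card_bij (fun p _ => p.2)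
      · intro p hp
        simp only [hs, mem_filter, mem_univ, true_and] at hp ⊢
        obtain ⟨⟨hadj, hcol⟩, h1⟩ := hp
        subst h1; exact ⟨hadj, hcol.symm⟩
      · intro p hp q hq h
        simp only [hs, mem_filter] at hp hq
        exact Prod.ext (hp.2.trans hq.2.symm) h
      · intro x hx
        simp only [mem_filter, mem_univ, true_and] at hx
        exact ⟨(v, x), by simp [hs, hx.1, hx.2.symm], rfl⟩
    have e2 : (s.filter fun p => ¬ p.1 = v ∧ p.2 = v).card = ds c := by
      apply Finset.card_bij (fun p _ => p.1)
      · intro p hp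
        simp only [hs, mem_filter, mem_univ, true_and] at hp ⊢
        obtain ⟨⟨hadj, hcol⟩, -, h2⟩ := hp
        subst h2; exact ⟨hadj.symm, hcol⟩
      · intro p hp q hq h
        simp only [hs, mem_filter] at hp hq
        exact Prod.ext h (hp.2.2.trans hq.2.2.symm)
      · intro x hx
        simp only [mem_filter, mem_univ, true_and] at hx
        exact ⟨(x, v), by simp [hs, hx.1.symm, hx.2, G.ne_of_adj hx.1.symm], rfl⟩
    have e3 : (s.filter fun p => ¬ p.1 = v ∧ ¬ p.2 = v).card = Cv c := by
      rw [hs, Finset.filter_filter]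
    omega
  set c' : V → Fin 2 := Function.update c v (c v + 1) with hc'
  have hflip : ∀ a b : Fin 2, (a = b + 1 ↔ a ≠ b) := by decide
  have eds : ds c' = dd c := by
    show (univ.filter fun x => G.Adj v x ∧ c' x = c' v).card
      = (univ.filter fun x => G.Adj v x ∧ c x ≠ c v).card
    apply congrArg
    ext x
    simp only [mem_filter, mem_univ, true_and, and_congr_right_iff]
    intro hadj
    rw [hc', Function.update_of_ne hadj.ne', Function.update_self]
    exact hflip _ _
  have eCv : Cv c' = Cv c := by
    show (univ.filter fun p : V × V =>
        (G.Adj p.1 p.2 ∧ c' p.1 = c' p.2) ∧ ¬ p.1 = v ∧ ¬ p.2 = v).card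
      = (univ.filter fun p : V × V =>
        (G.Adj p.1 p.2 ∧ c p.1 = c p.2) ∧ ¬ p.1 = v ∧ ¬ p.2 = v).card
    apply congrArg
    ext p
    simp only [mem_filter, mem_univ, true_and]
    constructor
    · rintro ⟨⟨h1, h2⟩, h3, h4⟩
      rw [hc', Function.update_of_ne h3, Function.update_of_ne h4] at h2
      exact ⟨⟨h1, h2⟩, h3, h4⟩
    · rintro ⟨⟨h1, h2⟩, h3, h4⟩
      refine ⟨⟨h1, ?_⟩, h3, h4⟩
      rw [hc', Function.update_of_ne h3, Function.update_of_ne h4]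
      exact h2
  have hle := hc c' (mem_univ _)
  rw [hsplit c, hsplit c', eds, eCv] at hle
  have hfin : ds c ≤ dd c := by omega
  have n1 : Nat.card {x // G.Adj v x ∧ c x = c v} = ds c := by
    rw [Nat.card_eq_fintype_card]
    simp [hds, Fintype.card_subtype]
  have n2 : Nat.card {x // G.Adj v x ∧ c x ≠ c v} = dd c := by
    rw [Nat.card_eq_fintype_card]
    simp [hdd, Fintype.card_subtype]
  omega

/-- Every locally finite graph admits an unfriendly partition. -/
theorem stmt2 {V : Type*} (G : SimpleGraph V) (hlf : ∀ v : V, (G.neighborSet v).Finite) :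
    ∃ c : V → Fin 2, ∀ v : V,
      Nat.card {x : V // G.Adj v x ∧ c x = c v} ≤
        Nat.card {x : V // G.Adj v x ∧ c x ≠ c v} := by
  classical
  letI : TopologicalSpace (Fin 2) := ⊥
  haveI : DiscreteTopology (Fin 2) := ⟨rfl⟩
  set K : V → Set (V → Fin 2) := fun v =>
    {c | Nat.card {x : V // G.Adj v x ∧ c x = c v} ≤
      Nat.card {x : V // G.Adj v x ∧ c x ≠ c v}} with hK
  have hloc : ∀ (v : V) (c c₀ : V → Fin 2),
      (∀ x ∈ insert v (G.neighborSet v), c x = c₀ x) → (c ∈ K v ↔ c₀ ∈ K v) := by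
    intro v c c₀ hagree
    have hv : c v = c₀ v := hagree v (Set.mem_insert _ _)
    have hx : ∀ x, G.Adj v x → c x = c₀ x := fun x hx =>
      hagree x (Set.mem_insert_of_mem _ hx)
    have h1 : ∀ x : V, (G.Adj v x ∧ c x = c v) ↔ (G.Adj v x ∧ c₀ x = c₀ v) := by
      intro x
      constructor <;> rintro ⟨h, h2⟩ <;> refine ⟨h, ?_⟩
      · rw [← hx x h, ← hv]; exact h2
      · rw [hx x h, hv]; exact h2
    have h2 : ∀ x : V, (G.Adj v x ∧ c x ≠ c v) ↔ (G.Adj v x ∧ c₀ x ≠ c₀ v) := by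
      intro x
      constructor <;> rintro ⟨h, h2⟩ <;> refine ⟨h, ?_⟩
      · rw [← hx x h, ← hv]; exact h2
      · rw [hx x h, hv]; exact h2
    simp only [hK, Set.mem_setOf_eq]
    rw [Nat.card_congr (Equiv.subtypeEquivRight h1),
      Nat.card_congr (Equiv.subtypeEquivRight h2)]
  have hclosed : ∀ v, IsClosed (K v) := by
    intro v
    have hfin : (insert v (G.neighborSet v)).Finite := (hlf v).insert v
    haveI := hfin.to_subtype
    set r : (V → Fin 2) → ((insert v (G.neighborSet v) : Set V) → Fin 2) :=
      fun c x => c x.1 with hr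
    have hrc : Continuous r := continuous_pi fun i => continuous_apply i.1
    have heq : K v = r ⁻¹' (r '' K v) := by
      apply Set.Subset.antisymm (Set.subset_preimage_image _ _)
      rintro c ⟨c₀, hc₀, hrc0⟩
      exact (hloc v c c₀ fun x hx => (congrFun hrc0 ⟨x, hx⟩).symm).mpr hc₀
    rw [heq]
    exact (isClosed_discrete _).preimage hrc
  have hne : (⋂ v, K v).Nonempty := by
    rw [Set.nonempty_iff_ne_empty]
    intro hempty
    obtain ⟨t, ht⟩ := IsCompact.elim_finite_subfamily_closed
      (isCompact_univ (X := V → Fin 2)) K hclosed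
      (by rw [Set.univ_inter]; exact hempty)
    rw [Set.univ_inter] at ht
    -- build a coloring good on the finite set t
    set T : Finset V := t ∪ t.biUnion (fun v => (hlf v).toFinset) with hT
    set s : Set V := ↑T with hs
    haveI : Fintype s := FinsetCoe.fintype T
    obtain ⟨c', hc'⟩ := fin_unfriendly (G.induce s)
    set c : V → Fin 2 := fun x => if h : x ∈ s then c' ⟨x, h⟩ else 0 with hcdef
    have hmem : c ∈ ⋂ v ∈ t, K v := by
      rw [Set.mem_iInter₂]
      intro v hv
      have hvT : v ∈ T := by rw [hT]; exact Finset.mem_union_left _ hv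
      have hvs : v ∈ s := Finset.mem_coe.mpr hvT
      have hnb : ∀ x, G.Adj v x → x ∈ s := by
        intro x hx
        have hx' : x ∈ (hlf v).toFinset := (hlf v).mem_toFinset.2 hx
        refine Finset.mem_coe.mpr ?_
        rw [hT]
        exact Finset.mem_union_right _ (Finset.mem_biUnion.2 ⟨v, hv, hx'⟩)
      have hcc : ∀ x (h : x ∈ s), c x = c' ⟨x, h⟩ := fun x h => dif_pos h
      have key : ∀ p : Fin 2 → Fin 2 → Prop,
          Nat.card {x : V // G.Adj v x ∧ p (c x) (c v)} =
            Nat.card {y : s // (G.induce s).Adj ⟨v, hvs⟩ y ∧ p (c' y) (c' ⟨v, hvs⟩)} := by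
        intro p
        apply Nat.card_congr
        exact {
          toFun := fun x => ⟨⟨x.1, hnb x.1 x.2.1⟩, x.2.1, by
            rw [← hcc x.1 (hnb x.1 x.2.1), ← hcc v hvs]; exact x.2.2⟩
          invFun := fun y => ⟨y.1.1, y.2.1, by
            rw [hcc y.1.1 y.1.2, hcc v hvs]; exact y.2.2⟩
          left_inv := fun x => Subtype.ext rfl
          right_inv := fun y => Subtype.ext (Subtype.ext rfl) }
      have hKv : c ∈ K v := by
        simp only [hK, Set.mem_setOf_eq]
        have k1 := key (fun a b => a = b)
        have k2 := key (fun a b => a ≠ b)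
        rw [k1, k2]
        exact hc' ⟨v, hvs⟩
      exact hKv
    rw [ht] at hmem
    exact hmem
  obtain ⟨c, hc⟩ := hne
  exact ⟨c, fun v => Set.mem_iInter.1 hc v⟩
end

section
/- The union of all bipartite pairs of a graph is itself a bipartite pair (i.e., there is a maximal bipartite pair). -/
open Cardinal

/-- `(F₀, F₁)` is a bipartite pair: `F₀ ⊆ M` (vertices of degree `κ`), `F₁ ⊆ N = V \ M`,
they are disjoint, every `v ∈ F₀` has full degree `κ` many neighbors in `F₁`, and every
`u ∈ F₁` has full degree many neighbors in `F₀`. -/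
def IsBipartitePair {V : Type u} (G : SimpleGraph V) (κ : Cardinal.{u})
    (F0 F1 : Set V) : Prop :=
  Disjoint F0 F1 ∧
    (∀ v ∈ F0, #↥(G.neighborSet v) = κ ∧ #↥(G.neighborSet v ∩ F1) = #↥(G.neighborSet v)) ∧
    (∀ u ∈ F1, #↥(G.neighborSet u) ≠ κ ∧ #↥(G.neighborSet u ∩ F0) = #↥(G.neighborSet u))

theorem Cardinal.mk_inter_eq_of_subset {α : Type u} {s A B : Set α}
    (hA : #↥(s ∩ A) = #↥s) (hAB : A ⊆ B) : #↥(s ∩ B) = #↥s :=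
  le_antisymm (mk_le_mk_of_subset Set.inter_subset_left)
    (hA ▸ mk_le_mk_of_subset (Set.inter_subset_inter_right s hAB))

/-- The componentwise union of all bipartite pairs is itself a bipartite pair:
there is a maximal bipartite pair. -/
theorem stmt9 {V : Type u} (G : SimpleGraph V) (κ : Cardinal.{u}) :
    IsBipartitePair G κ
      (⋃₀ {F0 | ∃ F1, IsBipartitePair G κ F0 F1})
      (⋃₀ {F1 | ∃ F0, IsBipartitePair G κ F0 F1}) := by
  have sub0 {F0 F1 : Set V} (h : IsBipartitePair G κ F0 F1) :
      F0 ⊆ ⋃₀ {F0 | ∃ F1, IsBipartitePair G κ F0 F1} :=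
    Set.subset_sUnion_of_mem ⟨F1, h⟩
  have sub1 {F0 F1 : Set V} (h : IsBipartitePair G κ F0 F1) :
      F1 ⊆ ⋃₀ {F1 | ∃ F0, IsBipartitePair G κ F0 F1} :=
    Set.subset_sUnion_of_mem ⟨F0, h⟩
  refine ⟨Set.disjoint_left.2 ?_, ?_, ?_⟩
  · rintro v ⟨F0, ⟨F1, h⟩, hv⟩ ⟨F1', ⟨F0', h'⟩, hv'⟩
    exact (h'.2.2 v hv').1 (h.2.1 v hv).1
  · rintro v ⟨F0, ⟨F1, h⟩, hv⟩
    obtain ⟨hdeg, hfull⟩ := h.2.1 v hv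
    exact ⟨hdeg, mk_inter_eq_of_subset hfull (sub1 h)⟩
  · rintro u ⟨F1, ⟨F0, h⟩, hu⟩
    obtain ⟨hdeg, hfull⟩ := h.2.2 u hu
    exact ⟨hdeg, mk_inter_eq_of_subset hfull (sub0 h)⟩
end

section
/- The closure c̄ of a partial coloring c is unfriendly at every vertex of its domain that is not in the domain of c, provided c itself colors those vertices via the closure procedure. -/
open Cardinal
open scoped Classical

/-- One step of the closure procedure: every uncolored vertex with strictly fewer
uncolored neighbors than its degree receives a color `i` such that it has full degree
many neighbors of color `1 - i`. -/
noncomputable def closureStep {V : Type u} (G : SimpleGraph V)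
    (f : V → Option (Fin 2)) : V → Option (Fin 2) := fun v =>
  match f v with
  | some i => some i
  | none =>
    if h : #{x : V // G.Adj v x ∧ f x = none} < #{x : V // G.Adj v x} ∧
        ∃ i : Fin 2, #{x : V // G.Adj v x ∧ f x = some (1 - i)} = #{x : V // G.Adj v x}
    then some h.2.choose
    else none

/-- The stages of the transfinite closure procedure. -/
noncomputable def closureStage {V : Type u} (G : SimpleGraph V)
    (f : V → Option (Fin 2)) (o : Ordinal.{u}) : V → Option (Fin 2) :=
  closureStep G (fun v =>
    if h : ∃ p : {p : Ordinal.{u} // p < o}, closureStage G f p.1 v ≠ none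
    then closureStage G f h.choose.1 v
    else f v)
termination_by o
decreasing_by
  all_goals first | exact p.2 | exact h.choose.2

/-- The closure of a partial coloring. -/
noncomputable def partialClosure {V : Type u} (G : SimpleGraph V)
    (f : V → Option (Fin 2)) : V → Option (Fin 2) := fun v =>
  if h : ∃ o : Ordinal.{u}, closureStage G f o v ≠ none
  then closureStage G f h.choose v
  else none

section Aux
universe u
variable {V : Type u} (G : SimpleGraph V) (f : V → Option (Fin 2))

lemma closureStage_def (o : Ordinal.{u}) :
    closureStage G f o = closureStep G (fun v =>
      if h : ∃ p : {p : Ordinal.{u} // p < o}, closureStage G f p.1 v ≠ none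
      then closureStage G f h.choose.1 v
      else f v) := by
  rw [closureStage]

lemma closureStage_agree : ∀ o : Ordinal.{u}, ∀ p < o, ∀ v : V,
    closureStage G f p v ≠ none → closureStage G f o v = closureStage G f p v := by
  intro o
  induction o using Ordinal.induction with
  | h o IH =>
    intro p hp v hpv
    have hex : ∃ q : {q : Ordinal.{u} // q < o}, closureStage G f q.1 v ≠ none :=
      ⟨⟨p, hp⟩, hpv⟩
    have key : closureStage G f hex.choose.1 v = closureStage G f p v := by
      rcases lt_trichotomy hex.choose.1 p with h1 | h1 | h1
      · exact (IH p hp hex.choose.1 h1 v hex.choose_spec).symm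
      · rw [h1]
      · exact IH hex.choose.1 hex.choose.2 p h1 v hpv
    obtain ⟨j, hj⟩ := Option.ne_none_iff_exists'.mp hpv
    rw [closureStage_def, closureStep]
    simp only [dif_pos hex, key, hj]

lemma closureStage_of_f {v : V} {j : Fin 2} (hj : f v = some j) :
    ∀ o : Ordinal.{u}, closureStage G f o v = some j := by
  intro o
  induction o using Ordinal.induction with
  | h o IH =>
    rw [closureStage_def, closureStep]
    by_cases hex : ∃ q : {q : Ordinal.{u} // q < o}, closureStage G f q.1 v ≠ none
    · simp only [dif_pos hex, IH hex.choose.1 hex.choose.2]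
    · simp only [dif_neg hex, hj]

lemma partialClosure_of_stage {o : Ordinal.{u}} {v : V} {j : Fin 2}
    (h : closureStage G f o v = some j) : partialClosure G f v = some j := by
  have hex : ∃ o : Ordinal.{u}, closureStage G f o v ≠ none := ⟨o, by simp [h]⟩
  rw [partialClosure, dif_pos hex]
  rcases lt_trichotomy hex.choose o with h1 | h1 | h1
  · rw [← closureStage_agree G f o hex.choose h1 v hex.choose_spec, h]
  · rw [h1, h]
  · rw [closureStage_agree G f hex.choose o h1 v (by simp [h]), h]

end Aux

/-- The closure of a partial coloring is unfriendly at every vertex of its domain not in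
the domain of the original partial coloring: the opposite-colored neighbors are at least
as many as the same-colored neighbors together with the uncolored ones. -/
theorem stmt12 {V : Type u} (G : SimpleGraph V)
    (hdeg : ∀ v : V, ℵ₀ ≤ #↥(G.neighborSet v)) (f : V → Option (Fin 2))
    (v : V) (i : Fin 2) (hv : f v = none) (hcv : partialClosure G f v = some i) :
    #{x : V // G.Adj v x ∧
        (partialClosure G f x = some i ∨ partialClosure G f x = none)} ≤
      #{x : V // G.Adj v x ∧ partialClosure G f x = some (1 - i)} := by
  -- there is a stage where v is colored
  have hex : ∃ o : Ordinal.{u}, closureStage G f o v ≠ none := by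
    by_contra hne
    rw [partialClosure, dif_neg hne] at hcv
    exact Option.some_ne_none _ hcv.symm
  -- take the least such stage
  set S : Set Ordinal.{u} := {o | closureStage G f o v ≠ none} with hS
  have hSne : S.Nonempty := hex
  set o : Ordinal.{u} := wellFounded_lt.min S hSne with ho
  have homem : closureStage G f o v ≠ none := wellFounded_lt.min_mem S hSne
  have hmin : ∀ p < o, closureStage G f p v = none := by
    intro p hp
    by_contra hne
    exact wellFounded_lt.not_lt_min S hne hp
  obtain ⟨j, hj⟩ := Option.ne_none_iff_exists'.mp homem
  have hji : j = i := by
    have := partialClosure_of_stage G f hj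
    rw [hcv] at this; exact (Option.some_injective _ this).symm
  subst hji
  -- the auxiliary function at stage o
  set g : V → Option (Fin 2) := fun x =>
    if h : ∃ p : {p : Ordinal.{u} // p < o}, closureStage G f p.1 x ≠ none
    then closureStage G f h.choose.1 x
    else f x with hg
  have hstage : closureStage G f o = closureStep G g := closureStage_def G f o
  have hgv : g v = none := by
    rw [hg]
    have : ¬ ∃ p : {p : Ordinal.{u} // p < o}, closureStage G f p.1 v ≠ none := by
      rintro ⟨p, hp⟩; exact hp (hmin p.1 p.2)
    simp only [dif_neg this, hv]
  -- unfold the step at v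
  rw [hstage, closureStep] at hj
  simp only [hgv] at hj
  split_ifs at hj with hcond
  · -- the condition held; extract the cardinality equality
    have hchoose : hcond.2.choose = j := Option.some_injective _ hj
    have hspec := hcond.2.choose_spec
    rw [hchoose] at hspec
    -- every neighbor colored 1-j by g gets that color in the closure
    have hpersist : ∀ x : V, g x = some (1 - j) → partialClosure G f x = some (1 - j) := by
      intro x hx
      simp only [hg] at hx
      split_ifs at hx with hx'
      · exact partialClosure_of_stage G f hx
      · exact partialClosure_of_stage G f (closureStage_of_f G f hx 0)
    calc #{x : V // G.Adj v x ∧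
          (partialClosure G f x = some j ∨ partialClosure G f x = none)}
        ≤ #{x : V // G.Adj v x} := mk_subtype_le_of_subset (fun x hx => hx.1)
      _ = #{x : V // G.Adj v x ∧ g x = some (1 - j)} := hspec.symm
      _ ≤ #{x : V // G.Adj v x ∧ partialClosure G f x = some (1 - j)} :=
          mk_subtype_le_of_subset (fun x hx => ⟨hx.1, hpersist x hx.2⟩)
end
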